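/- Let 0 < λ ≤ 1 and −1 ≤ B < A ≤ 0, and let a_n = a_n(A,B,λ) denote the Taylor coefficients of v_λ(A,B,z). Then for all n ∈ ℕ (n ≥ 1), (n+1) a_{n+1} + B n a_n > 0; equivalently, the analytic function (1+Bz) · d/dz [v_λ(A,B,z)] has strictly positive Taylor coefficients. -/

import Mathlib

/-!
Write `v = F G` with `F = (1 + A z)^λ` and `G = (1 + B z)^(-λ)`. From `(1 + A z) F' = λ A F` and
`(1 + B z) G' = -λ B G` one gets `(1 + B z) v' = λ (A - B) (1 + A z)^(λ - 1) (1 + B z)^(-λ)`, whose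
`n`-th coefficient is `(n + 1) a_{n+1} + B n a_n`. For `λ ≤ 1`, `A ≤ 0` and `λ > 0`, `B < 0`, both
binomial series on the right have nonnegative coefficients, those of `(1 + B z)^(-λ)` being even
positive, and the constant coefficient of `(1 + A z)^(λ - 1)` is `1`.
-/

/-- The Taylor coefficient `a_n(A,B,λ)` of `v_λ(A,B,z) = ((1+Az)/(1+Bz))^λ` about `z = 0`:
`a_n = ∑_{k=0}^{n} ([λ]_k / k!) ((λ)_{n−k} / (n−k)!) A^k (−B)^{n−k}`, where `[λ]_k` is the
falling factorial and `(λ)_k` the Pochhammer (rising factorial). -/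
noncomputable def janowskiCoeff (l A B : ℝ) (n : ℕ) : ℝ :=
  ∑ k ∈ Finset.range (n + 1),
    ((descPochhammer ℝ k).eval l / (k.factorial : ℝ)) *
      ((ascPochhammer ℝ (n - k)).eval l / ((n - k).factorial : ℝ)) * A ^ k * (-B) ^ (n - k)

open Finset Polynomial

/-- The coefficient of `z^k` in the binomial series of `(1 + A z)^x`. -/
noncomputable def binomSeriesCoeff (x A : ℝ) (k : ℕ) : ℝ :=
  (descPochhammer ℝ k).eval x / (k.factorial : ℝ) * A ^ k

@[simp]
lemma binomSeriesCoeff_zero (x A : ℝ) : binomSeriesCoeff x A 0 = 1 := by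
  simp [binomSeriesCoeff]

lemma succ_mul_binomSeriesCoeff_succ (x A : ℝ) (k : ℕ) :
    ((k : ℝ) + 1) * binomSeriesCoeff x A (k + 1) = A * (x - k) * binomSeriesCoeff x A k := by
  have hk : (k.factorial : ℝ) ≠ 0 := by positivity
  simp only [binomSeriesCoeff, descPochhammer_succ_eval, Nat.factorial_succ, Nat.cast_mul,
    Nat.cast_succ, pow_succ]
  field_simp

lemma sub_mul_binomSeriesCoeff (x A : ℝ) (k : ℕ) :
    (x - k) * binomSeriesCoeff x A k = x * binomSeriesCoeff (x - 1) A k := by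
  have hpoch : (descPochhammer ℝ k).eval x * (x - k) = x * (descPochhammer ℝ k).eval (x - 1) := by
    rw [← descPochhammer_succ_eval, descPochhammer_succ_left, eval_mul, eval_X, eval_comp,
      eval_sub, eval_X, eval_one]
  simp only [binomSeriesCoeff]
  linear_combination A ^ k / (k.factorial : ℝ) * hpoch

lemma binomSeriesCoeff_neg_eq_ascPochhammer (x B : ℝ) (j : ℕ) :
    binomSeriesCoeff (-x) B j = (ascPochhammer ℝ j).eval x / (j.factorial : ℝ) * (-B) ^ j := by
  have h := ascPochhammer_eval_neg_eq_descPochhammer ℝ (-x) j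
  rw [neg_neg] at h
  have hsign : ((-1 : ℝ) ^ j) * (-1) ^ j = 1 := by rw [← mul_pow]; norm_num
  rw [binomSeriesCoeff, h, neg_pow B]
  linear_combination -((descPochhammer ℝ j).eval (-x) / (j.factorial : ℝ) * B ^ j) * hsign

lemma binomSeriesCoeff_nonneg {x A : ℝ} (hx : x ≤ 0) (hA : A ≤ 0) (k : ℕ) :
    0 ≤ binomSeriesCoeff x A k := by
  induction k with
  | zero => simp
  | succ k ih =>
    have hrec := succ_mul_binomSeriesCoeff_succ x A k
    have hfactor : 0 ≤ A * (x - k) :=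
      mul_nonneg_of_nonpos_of_nonpos hA (by linarith [k.cast_nonneg (α := ℝ)])
    have hk : (0 : ℝ) < k + 1 := by positivity
    nlinarith [mul_nonneg hfactor ih]

lemma binomSeriesCoeff_pos {x A : ℝ} (hx : x < 0) (hA : A < 0) (k : ℕ) :
    0 < binomSeriesCoeff x A k := by
  induction k with
  | zero => simp
  | succ k ih =>
    have hrec := succ_mul_binomSeriesCoeff_succ x A k
    have hfactor : 0 < A * (x - k) :=
      mul_pos_of_neg_of_neg hA (by linarith [k.cast_nonneg (α := ℝ)])
    have hk : (0 : ℝ) < k + 1 := by positivity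
    nlinarith [mul_pos hfactor ih]

/-- The coefficient form of the Leibniz rule `(f g)' = f' g + f g'`. -/
lemma succ_mul_sum_antidiagonal_succ (f g : ℕ → ℝ) (n : ℕ) :
    ((n : ℝ) + 1) * ∑ p ∈ antidiagonal (n + 1), f p.1 * g p.2 =
      ∑ p ∈ antidiagonal n,
        (((p.1 : ℝ) + 1) * f (p.1 + 1) * g p.2 + f p.1 * (((p.2 : ℝ) + 1) * g (p.2 + 1))) := by
  have hsplit : ((n : ℝ) + 1) * ∑ p ∈ antidiagonal (n + 1), f p.1 * g p.2 =
      ∑ p ∈ antidiagonal (n + 1), (p.1 : ℝ) * f p.1 * g p.2 +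
        ∑ p ∈ antidiagonal (n + 1), f p.1 * ((p.2 : ℝ) * g p.2) := by
    rw [mul_sum, ← sum_add_distrib]
    refine sum_congr rfl fun p hp => ?_
    have hsum : (p.1 : ℝ) + p.2 = n + 1 := by exact_mod_cast mem_antidiagonal.mp hp
    rw [← hsum]
    ring
  rw [hsplit, Nat.sum_antidiagonal_succ, Nat.sum_antidiagonal_succ', sum_add_distrib]
  push_cast
  ring

lemma janowskiCoeff_eq_sum_antidiagonal (l A B : ℝ) (n : ℕ) :
    janowskiCoeff l A B n =
      ∑ p ∈ antidiagonal n, binomSeriesCoeff l A p.1 * binomSeriesCoeff (-l) B p.2 := by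
  rw [Nat.sum_antidiagonal_eq_sum_range_succ_mk, janowskiCoeff]
  refine sum_congr rfl fun k _ => ?_
  rw [binomSeriesCoeff_neg_eq_ascPochhammer, binomSeriesCoeff]
  ring

lemma janowskiCoeff_succ_combination_eq (l A B : ℝ) (n : ℕ) :
    ((n : ℝ) + 1) * janowskiCoeff l A B (n + 1) + B * (n : ℝ) * janowskiCoeff l A B n =
      l * (A - B) *
        ∑ p ∈ antidiagonal n, binomSeriesCoeff (l - 1) A p.1 * binomSeriesCoeff (-l) B p.2 := by
  rw [janowskiCoeff_eq_sum_antidiagonal, janowskiCoeff_eq_sum_antidiagonal,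
    succ_mul_sum_antidiagonal_succ (binomSeriesCoeff l A) (binomSeriesCoeff (-l) B), mul_sum,
    mul_sum, ← sum_add_distrib]
  simp only [succ_mul_binomSeriesCoeff_succ]
  refine sum_congr rfl fun p hp => ?_
  have hn : (p.1 : ℝ) + p.2 = n := by exact_mod_cast mem_antidiagonal.mp hp
  rw [← hn]
  -- for `i + j = n`: `A (l - i) - B (l + j) + B (i + j) = (A - B) (l - i)`
  linear_combination (A - B) * binomSeriesCoeff (-l) B p.2 * sub_mul_binomSeriesCoeff l A p.1

theorem succ_coeff_combination_pos_general (l A B : ℝ) (hl0 : 0 < l) (hl1 : l ≤ 1)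
    (hBA : B < A) (hA : A ≤ 0) (n : ℕ) :
    0 < ((n : ℝ) + 1) * janowskiCoeff l A B (n + 1) + B * (n : ℝ) * janowskiCoeff l A B n := by
  have hB : B < 0 := hBA.trans_le hA
  have hG : ∀ j, 0 < binomSeriesCoeff (-l) B j := binomSeriesCoeff_pos (neg_neg_of_pos hl0) hB
  rw [janowskiCoeff_succ_combination_eq]
  refine mul_pos (mul_pos hl0 (sub_pos.2 hBA)) (sum_pos' (fun p _ => ?_) ⟨(0, n), by simp, ?_⟩)
  · exact mul_nonneg (binomSeriesCoeff_nonneg (by linarith) hA p.1) (hG p.2).le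
  · simpa using hG n

theorem succ_coeff_combination_pos (l A B : ℝ) (hl0 : 0 < l) (hl1 : l ≤ 1)
    (hB : -1 ≤ B) (hBA : B < A) (hA : A ≤ 0) (n : ℕ) (hn : 1 ≤ n) :
    0 < ((n : ℝ) + 1) * janowskiCoeff l A B (n + 1) + B * (n : ℝ) * janowskiCoeff l A B n :=
  succ_coeff_combination_pos_general l A B hl0 hl1 hBA hA n
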